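/- arXiv:2011.06052 — 2 statements merged into one kernel-verified Lean document; each statement's English description precedes it below -/
import Mathlib

section
/- Let F : ℝⁿ → ℝ be twice continuously differentiable with ∇F Lipschitz continuous with constant L > 0. Suppose ξ* ∈ ℝⁿ satisfies F(ξ*) = z and ‖∇F(ξ*)‖ ≥ K₀ > 0. Set r = K₀/L and let n̂ = ∇F(ξ*)/‖∇F(ξ*)‖. Then every point ξ in the closed ball of radius r centered at ξ* + r n̂ satisfies both F(ξ) ≥ z and ⟨n̂, ξ − ξ*⟩ ≤ 2r. (Ball-inclusion claim in the verification of assumption (A4) in the proof of Theorem 3.3.) -/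
open Set
open scoped RealInnerProductSpace NNReal

lemma descent_lemma {n : ℕ} (F : EuclideanSpace ℝ (Fin n) → ℝ)
    (hFsmooth : ContDiff ℝ 2 F) (L : ℝ≥0)
    (hFlip : LipschitzWith L (gradient F))
    (x y : EuclideanSpace ℝ (Fin n)) :
    F x + ⟪gradient F x, y - x⟫ - (L : ℝ) / 2 * ‖y - x‖ ^ 2 ≤ F y := by
  set v := y - x with hv
  have hdiff : Differentiable ℝ F := hFsmooth.differentiable (by norm_num)
  set g := gradient F x with hg
  set f : ℝ → ℝ := fun t => t * ⟪g, v⟫ - (F (x + t • v) - F x) with hf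
  set B : ℝ → ℝ := fun t => (L : ℝ) / 2 * ‖v‖ ^ 2 * t ^ 2 with hB
  have hc : ∀ t : ℝ, HasDerivAt (fun s : ℝ => x + s • v) v t := by
    intro t
    simpa using ((hasDerivAt_id t).smul_const v).const_add x
  have hFc : ∀ t : ℝ, HasDerivAt (fun s : ℝ => F (x + s • v))
      ⟪gradient F (x + t • v), v⟫ t := by
    intro t
    have h1 := ((hdiff (x + t • v)).hasGradientAt).hasFDerivAt
    exact (h1.comp_hasDerivAt t (hc t)).congr_deriv (by simp)
  have hf' : ∀ t : ℝ, HasDerivAt f (⟪g, v⟫ - ⟪gradient F (x + t • v), v⟫) t := by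
    intro t
    have h1 : HasDerivAt (fun s : ℝ => s * ⟪g, v⟫) ⟪g, v⟫ t := by
      simpa using (hasDerivAt_id t).mul_const ⟪g, v⟫
    exact h1.sub ((hFc t).sub_const (F x))
  have hB' : ∀ t : ℝ, HasDerivAt B ((L : ℝ) * ‖v‖ ^ 2 * t) t := by
    intro t
    have := (hasDerivAt_pow 2 t).const_mul ((L : ℝ) / 2 * ‖v‖ ^ 2)
    refine this.congr_deriv ?_
    ring
  have key : f 1 ≤ B 1 := by
    have := image_le_of_deriv_right_le_deriv_boundary
      (f := f) (f' := fun t => ⟪g, v⟫ - ⟪gradient F (x + t • v), v⟫)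
      (a := 0) (b := 1)
      (B := B) (B' := fun t => (L : ℝ) * ‖v‖ ^ 2 * t)
      (fun t _ => (hf' t).continuousAt.continuousWithinAt)
      (fun t _ => (hf' t).hasDerivWithinAt)
      (by simp [hf, hB])
      (fun t _ => (hB' t).continuousAt.continuousWithinAt)
      (fun t _ => (hB' t).hasDerivWithinAt)
      ?_ (right_mem_Icc.2 zero_le_one)
    · exact this
    · intro t ht
      have h1 : ⟪g, v⟫ - ⟪gradient F (x + t • v), v⟫ = ⟪g - gradient F (x + t • v), v⟫ := by
        rw [inner_sub_left]
      rw [← inner_sub_left]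
      calc ⟪g - gradient F (x + t • v), v⟫ ≤ ‖g - gradient F (x + t • v)‖ * ‖v‖ :=
            real_inner_le_norm _ _
        _ ≤ (L : ℝ) * ‖t • v‖ * ‖v‖ := by
            apply mul_le_mul_of_nonneg_right _ (norm_nonneg v)
            have := hFlip.dist_le_mul x (x + t • v)
            rw [dist_eq_norm, dist_eq_norm] at this
            simpa [norm_sub_rev] using this
        _ = (L : ℝ) * ‖v‖ ^ 2 * t := by
            rw [norm_smul, Real.norm_eq_abs, abs_of_nonneg ht.1]
            ring
  have h1 : f 1 = ⟪g, v⟫ - (F y - F x) := by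
    simp [hf, hv]
  have h2 : B 1 = (L : ℝ) / 2 * ‖v‖ ^ 2 := by simp [hB]
  rw [h1, h2] at key
  linarith

/-- Ball-inclusion claim in the verification of assumption (A4) in the proof of
Theorem 3.3: if `∇F` is `L`-Lipschitz, `F(ξ*) = z` and `‖∇F(ξ*)‖ ≥ K₀ > 0`, then with
`r = K₀/L` and `n̂ = ∇F(ξ*)/‖∇F(ξ*)‖`, every point of the closed ball of radius `r`
centered at `ξ* + r n̂` satisfies `F(ξ) ≥ z` and `⟨n̂, ξ - ξ*⟩ ≤ 2r`. -/
theorem ball_subset_rare_event_slab {n : ℕ}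
    (F : EuclideanSpace ℝ (Fin n) → ℝ)
    (hFsmooth : ContDiff ℝ 2 F)
    (L : ℝ≥0) (hL : 0 < L)
    (hFlip : LipschitzWith L (gradient F))
    (z K₀ : ℝ) (hK₀ : 0 < K₀)
    (ξstar : EuclideanSpace ℝ (Fin n))
    (hact : F ξstar = z)
    (hgrad : K₀ ≤ ‖gradient F ξstar‖) :
    ∀ ξ ∈ Metric.closedBall
        (ξstar + (K₀ / L) • (‖gradient F ξstar‖⁻¹ • gradient F ξstar)) (K₀ / L),
      z ≤ F ξ ∧
      ⟪‖gradient F ξstar‖⁻¹ • gradient F ξstar, ξ - ξstar⟫ ≤ 2 * (K₀ / L) := by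
  intro ξ hξ
  set g := gradient F ξstar with hgdef
  have hLpos : (0 : ℝ) < (L : ℝ) := hL
  set r : ℝ := K₀ / (L : ℝ) with hr
  have hrpos : 0 < r := div_pos hK₀ hLpos
  have hng : 0 < ‖g‖ := lt_of_lt_of_le hK₀ hgrad
  set nh := ‖g‖⁻¹ • g with hnh
  have hnh1 : ‖nh‖ = 1 := by
    rw [hnh, norm_smul, norm_inv, norm_norm, inv_mul_cancel₀ (ne_of_gt hng)]
  set d := ξ - ξstar with hd
  have hball : ‖d - r • nh‖ ≤ r := by
    rw [Metric.mem_closedBall, dist_eq_norm] at hξ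
    have : ξ - (ξstar + r • nh) = d - r • nh := by rw [hd]; abel
    rwa [this] at hξ
  -- ‖d‖² ≤ 2 r ⟪nh, d⟫
  have hsq : ‖d‖ ^ 2 ≤ 2 * r * ⟪nh, d⟫ := by
    have h1 : ‖d - r • nh‖ ^ 2 ≤ r ^ 2 := by
      have := sq_le_sq' (by linarith [norm_nonneg (d - r • nh)]) hball
      simpa using this
    have h2 : ‖d - r • nh‖ ^ 2 = ‖d‖ ^ 2 - 2 * (r * ⟪d, nh⟫) + r ^ 2 := by
      rw [@norm_sub_sq_real, norm_smul, real_inner_smul_right, Real.norm_eq_abs,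
        abs_of_pos hrpos, mul_pow, hnh1]
      ring
    nlinarith [real_inner_comm nh d]
  have hinner_nonneg : 0 ≤ ⟪nh, d⟫ := by nlinarith [sq_nonneg ‖d‖]
  have hgd : ⟪g, d⟫ = ‖g‖ * ⟪nh, d⟫ := by
    rw [hnh, real_inner_smul_left]
    field_simp
  constructor
  · -- descent
    have hdesc := descent_lemma F hFsmooth L hFlip ξstar ξ
    rw [hact, ← hgdef, ← hd] at hdesc
    have h3 : (L : ℝ) / 2 * ‖d‖ ^ 2 ≤ K₀ * ⟪nh, d⟫ := by
      have : (L : ℝ) / 2 * ‖d‖ ^ 2 ≤ (L : ℝ) / 2 * (2 * r * ⟪nh, d⟫) := by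
        apply mul_le_mul_of_nonneg_left hsq (by positivity)
      calc (L : ℝ) / 2 * ‖d‖ ^ 2 ≤ (L : ℝ) / 2 * (2 * r * ⟪nh, d⟫) := this
        _ = ((L : ℝ) * r) * ⟪nh, d⟫ := by ring
        _ = K₀ * ⟪nh, d⟫ := by rw [hr]; field_simp
    have h4 : K₀ * ⟪nh, d⟫ ≤ ⟪g, d⟫ := by
      rw [hgd]
      exact mul_le_mul_of_nonneg_right hgrad hinner_nonneg
    linarith
  · -- slab
    calc ⟪nh, d⟫ ≤ ‖nh‖ * ‖d‖ := real_inner_le_norm _ _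
      _ = ‖d‖ := by rw [hnh1, one_mul]
      _ ≤ ‖d - r • nh‖ + ‖r • nh‖ := by
          simpa using norm_add_le (d - r • nh) (r • nh)
      _ ≤ r + r := by
          apply add_le_add hball
          rw [norm_smul, hnh1, Real.norm_eq_abs, abs_of_pos hrpos, mul_one]
      _ = 2 * r := by ring
end

section
/- Let Sⱼ(η) = ⟨η, μⱼ⟩ + ½⟨η, Σⱼ η⟩ for j = 1,…,M with each Σⱼ symmetric positive definite, let wⱼ > 0 with Σⱼ wⱼ = 1, and define S(η) = log ( Σ_{j=1}^{M} wⱼ exp(Sⱼ(η)) ). Then S is strongly convex with parameter ε = min_{j} λ_min(Σⱼ) > 0; that is, ∇²S(η) ⪰ ε Iₙ for all η ∈ ℝⁿ. (Claim (a) in the proof of Theorem 5.1: the cumulant generating function of a Gaussian mixture is strongly convex.) -/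
open Matrix Set
open scoped RealInnerProductSpace

section Aux

variable {n M : ℕ}

local notation "E" => EuclideanSpace ℝ (Fin n)

/-- weighted exponential term -/
noncomputable def mEx (w : Fin M → ℝ) (μ : Fin M → E) (A : Fin M → E →L[ℝ] E)
    (j : Fin M) (y : E) : ℝ :=
  w j * Real.exp (⟪y, μ j⟫ + (1 / 2) * ⟪y, A j y⟫)

/-- gradient of the j-th exponent -/
noncomputable def mV (μ : Fin M → E) (A : Fin M → E →L[ℝ] E) (j : Fin M) (y : E) : E :=
  μ j + A j y

/-- candidate gradient of the log-sum-exp -/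
noncomputable def mG (w : Fin M → ℝ) (μ : Fin M → E) (A : Fin M → E →L[ℝ] E) (y : E) : E :=
  (∑ j, mEx w μ A j y)⁻¹ • ∑ j, mEx w μ A j y • mV μ A j y

/-- candidate Hessian (= fderiv of mG) -/
noncomputable def mH (w : Fin M → ℝ) (μ : Fin M → E) (A : Fin M → E →L[ℝ] E) (y : E) :
    E →L[ℝ] E :=
  (∑ j, mEx w μ A j y)⁻¹ •
      (∑ j, (mEx w μ A j y • A j
        + ((mEx w μ A j y • innerSL ℝ (mV μ A j y)).smulRight (mV μ A j y))))
    + ((-(((∑ j, mEx w μ A j y) ^ 2)⁻¹) • (∑ j, mEx w μ A j y • innerSL ℝ (mV μ A j y))).smulRight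
        (∑ j, mEx w μ A j y • mV μ A j y))

theorem mEx_pos {w : Fin M → ℝ} (hw : ∀ j, 0 < w j) (μ : Fin M → E) (A : Fin M → E →L[ℝ] E)
    (j : Fin M) (y : E) : 0 < mEx w μ A j y :=
  mul_pos (hw j) (Real.exp_pos _)

theorem den_pos (hM : 0 < M) {w : Fin M → ℝ} (hw : ∀ j, 0 < w j) (μ : Fin M → E)
    (A : Fin M → E →L[ℝ] E) (y : E) : 0 < ∑ j, mEx w μ A j y := by
  haveI : Nonempty (Fin M) := ⟨⟨0, hM⟩⟩
  exact Finset.sum_pos (fun j _ => mEx_pos hw μ A j y) Finset.univ_nonempty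

theorem hasFDerivAt_q (μ0 : E) (A0 : E →L[ℝ] E) (hA : ∀ u v : E, ⟪A0 u, v⟫ = ⟪u, A0 v⟫)
    (y : E) :
    HasFDerivAt (fun z : E => ⟪z, μ0⟫ + (1 / 2) * ⟪z, A0 z⟫) (innerSL ℝ (μ0 + A0 y)) y := by
  have h1 : HasFDerivAt (fun z : E => ⟪z, μ0⟫)
      ((fderivInnerCLM ℝ (y, μ0)).comp ((ContinuousLinearMap.id ℝ E).prod 0)) y :=
    (hasFDerivAt_id y).inner ℝ (hasFDerivAt_const μ0 y)
  have h2 : HasFDerivAt (fun z : E => ⟪z, A0 z⟫)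
      ((fderivInnerCLM ℝ (y, A0 y)).comp ((ContinuousLinearMap.id ℝ E).prod A0)) y :=
    (hasFDerivAt_id y).inner ℝ A0.hasFDerivAt
  have h := h1.add (h2.const_mul (1 / 2))
  refine h.congr_fderiv ?_
  ext v
  simp only [innerSL_apply_apply, ContinuousLinearMap.add_apply, ContinuousLinearMap.coe_comp',
    Function.comp_apply, ContinuousLinearMap.prod_apply, ContinuousLinearMap.coe_id', id_eq,
    ContinuousLinearMap.zero_apply, fderivInnerCLM_apply, ContinuousLinearMap.coe_smul',
    Pi.smul_apply, smul_eq_mul, inner_add_left, inner_zero_right]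
  rw [real_inner_comm v μ0, ← hA y v, real_inner_comm v (A0 y)]
  ring

theorem hasFDerivAt_mEx {w : Fin M → ℝ} (μ : Fin M → E) (A : Fin M → E →L[ℝ] E)
    (hA : ∀ j, ∀ u v : E, ⟪A j u, v⟫ = ⟪u, A j v⟫) (j : Fin M) (y : E) :
    HasFDerivAt (mEx w μ A j) (mEx w μ A j y • innerSL ℝ (mV μ A j y)) y := by
  have h := ((hasFDerivAt_q (μ j) (A j) (hA j) y).exp).const_mul (w j)
  refine h.congr_fderiv ?_
  rw [mEx, mV, smul_smul]

theorem hasFDerivAt_mG (hM : 0 < M) {w : Fin M → ℝ} (hw : ∀ j, 0 < w j) (μ : Fin M → E)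
    (A : Fin M → E →L[ℝ] E) (hA : ∀ j, ∀ u v : E, ⟪A j u, v⟫ = ⟪u, A j v⟫) (y : E) :
    HasFDerivAt (mG w μ A) (mH w μ A y) y := by
  have hden : HasFDerivAt (fun z => ∑ j, mEx w μ A j z)
      (∑ j, mEx w μ A j y • innerSL ℝ (mV μ A j y)) y :=
    HasFDerivAt.fun_sum fun j _ => hasFDerivAt_mEx μ A hA j y
  have hdne : (∑ j, mEx w μ A j y) ≠ 0 := (den_pos hM hw μ A y).ne'
  have hinv : HasFDerivAt (fun z => (∑ j, mEx w μ A j z)⁻¹)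
      ((-(((∑ j, mEx w μ A j y) ^ 2)⁻¹)) • (∑ j, mEx w μ A j y • innerSL ℝ (mV μ A j y))) y :=
    (hasDerivAt_inv hdne).comp_hasFDerivAt y hden
  have hV : ∀ j, HasFDerivAt (fun z => mV μ A j z) (A j) y := by
    intro j
    have := (hasFDerivAt_const (μ j) y).add (A j).hasFDerivAt
    exact this.congr_fderiv (zero_add _)
  have hnum : HasFDerivAt (fun z => ∑ j, mEx w μ A j z • mV μ A j z)
      (∑ j, (mEx w μ A j y • A j
        + ((mEx w μ A j y • innerSL ℝ (mV μ A j y)).smulRight (mV μ A j y)))) y := by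
    refine HasFDerivAt.fun_sum fun j _ => ?_
    exact (hasFDerivAt_mEx μ A hA j y).smul (hV j)
  have h := hinv.smul hnum
  exact h.congr_fderiv rfl


theorem hasGradientAt_logsum (hM : 0 < M) {w : Fin M → ℝ} (hw : ∀ j, 0 < w j) (μ : Fin M → E)
    (A : Fin M → E →L[ℝ] E) (hA : ∀ j, ∀ u v : E, ⟪A j u, v⟫ = ⟪u, A j v⟫) (y : E) :
    HasGradientAt (fun z => Real.log (∑ j, mEx w μ A j z)) (mG w μ A y) y := by
  have hden : HasFDerivAt (fun z => ∑ j, mEx w μ A j z)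
      (∑ j, mEx w μ A j y • innerSL ℝ (mV μ A j y)) y :=
    HasFDerivAt.fun_sum fun j _ => hasFDerivAt_mEx μ A hA j y
  have hdne : (∑ j, mEx w μ A j y) ≠ 0 := (den_pos hM hw μ A y).ne'
  have hlog := hden.log hdne
  rw [hasGradientAt_iff_hasFDerivAt]
  refine hlog.congr_fderiv ?_
  ext v
  simp [mG, InnerProductSpace.toDual_apply_apply, sum_inner, real_inner_smul_left, inner_smul_left,
    ContinuousLinearMap.sum_apply]

theorem posdef_rayleigh (hn : 0 < n) {B : Matrix (Fin n) (Fin n) ℝ} (hB : B.PosDef) :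
    ∃ c > 0, ∀ x : E, c * ‖x‖ ^ 2 ≤ ⟪x, Matrix.toEuclideanLin B x⟫ := by
  have hpos : ∀ x : E, x ≠ 0 → 0 < ⟪x, Matrix.toEuclideanLin B x⟫ := by
    intro x hx
    have hip : ⟪x, Matrix.toEuclideanLin B x⟫
        = (WithLp.equiv 2 _ x) ⬝ᵥ (B *ᵥ WithLp.equiv 2 _ x) := by
      simp [PiLp.inner_apply, Matrix.toEuclideanLin_apply, dotProduct, Matrix.mulVec,
        WithLp.equiv, Equiv.refl_apply, RCLike.inner_apply]
      exact Finset.sum_congr rfl fun i _ => mul_comm _ _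
    rw [hip]
    have hx' : (WithLp.equiv 2 _ x) ≠ 0 := by
      simpa [WithLp.equiv] using hx
    have := hB.dotProduct_mulVec_pos hx'
    simpa using this
  haveI : Nontrivial E := by
    refine ⟨⟨0, EuclideanSpace.single ⟨0, hn⟩ (1 : ℝ), fun h => ?_⟩⟩
    have := congrArg (fun z : E => ‖z‖) h
    simp [EuclideanSpace.norm_single] at this
  have hcont : Continuous (fun x : E => ⟪x, Matrix.toEuclideanLin B x⟫) := by
    exact Continuous.inner continuous_id
      (LinearMap.toContinuousLinearMap (Matrix.toEuclideanLin B)).continuous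
  obtain ⟨x₀, hx₀mem, hx₀min⟩ := (isCompact_sphere (0 : E) 1).exists_isMinOn
    (NormedSpace.sphere_nonempty.mpr zero_le_one) hcont.continuousOn
  have hx₀norm : ‖x₀‖ = 1 := by simpa using hx₀mem
  have hx₀ne : x₀ ≠ 0 := by
    intro h; rw [h] at hx₀norm; simp at hx₀norm
  refine ⟨⟪x₀, Matrix.toEuclideanLin B x₀⟫, hpos x₀ hx₀ne, fun x => ?_⟩
  rcases eq_or_ne x 0 with rfl | hx
  · simp
  · have hxn : (0 : ℝ) < ‖x‖ := norm_pos_iff.mpr hx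
    have hun : (‖x‖⁻¹ • x) ∈ Metric.sphere (0 : E) 1 := by
      simp [norm_smul, abs_of_pos (inv_pos.mpr hxn), inv_mul_cancel₀ hxn.ne']
    have hle : ⟪x₀, Matrix.toEuclideanLin B x₀⟫
        ≤ ⟪(‖x‖⁻¹ • x), Matrix.toEuclideanLin B (‖x‖⁻¹ • x)⟫ := hx₀min hun
    have huip : ⟪(‖x‖⁻¹ • x), Matrix.toEuclideanLin B (‖x‖⁻¹ • x)⟫
        = ‖x‖⁻¹ * (‖x‖⁻¹ * ⟪x, Matrix.toEuclideanLin B x⟫) := by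
      rw [LinearMap.map_smul, real_inner_smul_left, real_inner_smul_right]
    rw [huip] at hle
    have h2 : ⟪x₀, Matrix.toEuclideanLin B x₀⟫ * ‖x‖ ^ 2
        ≤ ‖x‖⁻¹ * (‖x‖⁻¹ * ⟪x, Matrix.toEuclideanLin B x⟫) * ‖x‖ ^ 2 :=
      mul_le_mul_of_nonneg_right hle (sq_nonneg _)
    have key : ∀ c : ℝ, ‖x‖⁻¹ * (‖x‖⁻¹ * c) * ‖x‖ ^ 2 = c := by
      intro c
      field_simp
    rw [key] at h2
    exact h2

theorem key_ineq (hM : 0 < M) {w : Fin M → ℝ} (hw : ∀ j, 0 < w j) (μ : Fin M → E)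
    (A : Fin M → E →L[ℝ] E) {ε : ℝ}
    (hε' : ∀ (j : Fin M) (x : E), ε * ‖x‖ ^ 2 ≤ ⟪x, A j x⟫) (η x : E) :
    ε * ‖x‖ ^ 2 ≤ ⟪x, mH w μ A η x⟫ := by
  have hdpos : 0 < ∑ j, mEx w μ A j η := den_pos hM hw μ A η
  have hval : ⟪x, mH w μ A η x⟫
      = (∑ j, mEx w μ A j η)⁻¹ *
          ((∑ j, mEx w μ A j η * ⟪x, A j x⟫) + ∑ j, mEx w μ A j η * ⟪mV μ A j η, x⟫ ^ 2)
        - ((∑ j, mEx w μ A j η) ^ 2)⁻¹ * (∑ j, mEx w μ A j η * ⟪mV μ A j η, x⟫) ^ 2 := by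
    simp only [mH, ContinuousLinearMap.add_apply, ContinuousLinearMap.coe_smul', Pi.smul_apply,
      ContinuousLinearMap.coe_sum', Finset.sum_apply, ContinuousLinearMap.smulRight_apply,
      innerSL_apply_apply, smul_eq_mul, inner_add_right, inner_smul_right, inner_sum]
    rw [Finset.sum_add_distrib]
    have hcomm : ∀ j : Fin M, ⟪x, mV μ A j η⟫ = ⟪mV μ A j η, x⟫ :=
      fun j => real_inner_comm _ _
    simp only [hcomm]
    have hsq : ∀ j : Fin M, mEx w μ A j η * ⟪mV μ A j η, x⟫ * ⟪mV μ A j η, x⟫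
        = mEx w μ A j η * ⟪mV μ A j η, x⟫ ^ 2 := fun j => by ring
    simp only [hsq]
    ring
  rw [hval]
  set d := ∑ j, mEx w μ A j η with hd
  set P := ∑ j, mEx w μ A j η * ⟪x, A j x⟫ with hP
  set Q := ∑ j, mEx w μ A j η * ⟪mV μ A j η, x⟫ ^ 2 with hQ
  set R := ∑ j, mEx w μ A j η * ⟪mV μ A j η, x⟫ with hR
  have hPge : d * (ε * ‖x‖ ^ 2) ≤ P := by
    rw [hd, Finset.sum_mul]
    exact Finset.sum_le_sum fun j _ =>
      mul_le_mul_of_nonneg_left (hε' j x) (mEx_pos hw μ A j η).le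
  have hCS : R ^ 2 ≤ d * Q := by
    have h := Finset.sum_mul_sq_le_sq_mul_sq Finset.univ
      (fun j => Real.sqrt (mEx w μ A j η))
      (fun j => Real.sqrt (mEx w μ A j η) * ⟪mV μ A j η, x⟫)
    have h1 : ∀ j : Fin M, Real.sqrt (mEx w μ A j η) *
        (Real.sqrt (mEx w μ A j η) * ⟪mV μ A j η, x⟫) = mEx w μ A j η * ⟪mV μ A j η, x⟫ :=
      fun j => by rw [← mul_assoc, Real.mul_self_sqrt (mEx_pos hw μ A j η).le]
    have h2 : ∀ j : Fin M, Real.sqrt (mEx w μ A j η) ^ 2 = mEx w μ A j η :=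
      fun j => Real.sq_sqrt (mEx_pos hw μ A j η).le
    have h3 : ∀ j : Fin M, (Real.sqrt (mEx w μ A j η) * ⟪mV μ A j η, x⟫) ^ 2
        = mEx w μ A j η * ⟪mV μ A j η, x⟫ ^ 2 := fun j => by rw [mul_pow, h2 j]
    simp only [h1, h2, h3] at h
    exact h
  have e1 : ε * ‖x‖ ^ 2 ≤ d⁻¹ * P := by
    have := mul_le_mul_of_nonneg_left hPge (inv_pos.mpr hdpos).le
    rwa [← mul_assoc, inv_mul_cancel₀ hdpos.ne', one_mul] at this
  have e2 : (d ^ 2)⁻¹ * R ^ 2 ≤ d⁻¹ * Q := by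
    calc (d ^ 2)⁻¹ * R ^ 2 ≤ (d ^ 2)⁻¹ * (d * Q) :=
          mul_le_mul_of_nonneg_left hCS (by positivity)
      _ = d⁻¹ * Q := by
          rw [sq]
          field_simp
  have e3 : d⁻¹ * (P + Q) = d⁻¹ * P + d⁻¹ * Q := mul_add _ _ _
  linarith

end Aux

set_option maxHeartbeats 2000000 in
/-- Claim (a) in the proof of Theorem 5.1: the cumulant generating function
`S(η) = log(Σⱼ wⱼ exp(⟨η, μⱼ⟩ + ½⟨η, Σⱼη⟩))` of a Gaussian mixture is strongly convex
with parameter `ε = minⱼ λ_min(Σⱼ) > 0`: its Hessian satisfies `∇²S(η) ⪰ ε Iₙ`, i.e.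
`⟨x, ∇²S(η) x⟩ ≥ ε ‖x‖²` for all `η, x`. Here `ε` is characterized variationally as the
greatest constant `c` with `c‖x‖² ≤ ⟨x, Σⱼ x⟩` for all `j` and `x`. -/
theorem gaussianMixture_cgf_strongly_convex {n M : ℕ} (hM : 0 < M)
    (w : Fin M → ℝ) (hw : ∀ j, 0 < w j) (hsum : ∑ j, w j = 1)
    (μ : Fin M → EuclideanSpace ℝ (Fin n))
    (Cov : Fin M → Matrix (Fin n) (Fin n) ℝ) (hCov : ∀ j, (Cov j).PosDef)
    (S : EuclideanSpace ℝ (Fin n) → ℝ)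
    (hS : ∀ η, S η = Real.log (∑ j, w j *
      Real.exp (⟪η, μ j⟫ + (1 / 2) * ⟪η, Matrix.toEuclideanLin (Cov j) η⟫)))
    (ε : ℝ)
    (hε : IsGreatest {c : ℝ | ∀ (j : Fin M) (x : EuclideanSpace ℝ (Fin n)),
      c * ‖x‖ ^ 2 ≤ ⟪x, Matrix.toEuclideanLin (Cov j) x⟫} ε) :
    0 < ε ∧
      ∀ (η x : EuclideanSpace ℝ (Fin n)),
        ε * ‖x‖ ^ 2 ≤ ⟪x, fderiv ℝ (fun y => gradient S y) η x⟫ := by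
  have hA : ∀ (j : Fin M) (u v : EuclideanSpace ℝ (Fin n)),
      ⟪(LinearMap.toContinuousLinearMap (Matrix.toEuclideanLin (Cov j))) u, v⟫
        = ⟪u, (LinearMap.toContinuousLinearMap (Matrix.toEuclideanLin (Cov j))) v⟫ := by
    intro j u v
    exact Matrix.isHermitian_iff_isSymmetric.mp (hCov j).1 u v
  have hεpos : 0 < ε := by
    rcases Nat.eq_zero_or_pos n with hn | hn
    · exfalso
      subst hn
      have hmem : ε + 1 ∈ {c : ℝ | ∀ (j : Fin M) (x : EuclideanSpace ℝ (Fin 0)),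
          c * ‖x‖ ^ 2 ≤ ⟪x, Matrix.toEuclideanLin (Cov j) x⟫} := by
        intro j x
        have hx : x = 0 := Subsingleton.elim x 0
        simp [hx]
      have := hε.2 hmem
      linarith
    · haveI : Nonempty (Fin M) := ⟨⟨0, hM⟩⟩
      choose c hc0 hcle using fun j => posdef_rayleigh hn (hCov j)
      have hinfmem : (Finset.univ.inf' Finset.univ_nonempty c) ∈ {c : ℝ |
          ∀ (j : Fin M) (x : EuclideanSpace ℝ (Fin n)),
          c * ‖x‖ ^ 2 ≤ ⟪x, Matrix.toEuclideanLin (Cov j) x⟫} := by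
        intro j x
        calc (Finset.univ.inf' Finset.univ_nonempty c) * ‖x‖ ^ 2
            ≤ c j * ‖x‖ ^ 2 :=
              mul_le_mul_of_nonneg_right (Finset.inf'_le _ (Finset.mem_univ j)) (sq_nonneg _)
          _ ≤ _ := hcle j x
      have h0 : 0 < Finset.univ.inf' Finset.univ_nonempty c :=
        (Finset.lt_inf'_iff _).mpr fun j _ => hc0 j
      exact lt_of_lt_of_le h0 (hε.2 hinfmem)
  refine ⟨hεpos, fun η x => ?_⟩
  have hSfun : S = fun y => Real.log (∑ j, mEx w μ
      (fun j => LinearMap.toContinuousLinearMap (Matrix.toEuclideanLin (Cov j))) j y) := by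
    funext y
    rw [hS y]
    rfl
  subst hSfun
  have hgrad : (fun y => gradient (fun y => Real.log (∑ j, mEx w μ
      (fun j => LinearMap.toContinuousLinearMap (Matrix.toEuclideanLin (Cov j))) j y)) y)
      = mG w μ (fun j => LinearMap.toContinuousLinearMap (Matrix.toEuclideanLin (Cov j))) :=
    funext fun y => (hasGradientAt_logsum hM hw μ _ hA y).gradient
  rw [hgrad, (hasFDerivAt_mG hM hw μ _ hA η).fderiv]
  exact key_ineq hM hw μ _ (fun j x => hε.1 j x) η x
end
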